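/- The identity 516743639 = 2·3 + (1 + 2^2·3^6)·(2 + 3^11) holds, and 516743639 = 353 · 1463863 is its factorization into two primes; consequently ‖516743639‖ ≤ 63. -/

import Mathlib

/-- `IsSumProduct k n` means the positive integer `n` can be written as a
sum-product expression using exactly `k` ones, additions, multiplications
and parentheses. -/
inductive IsSumProduct : ℕ → ℕ → Prop
  | one : IsSumProduct 1 1
  | add {j k a b : ℕ} : IsSumProduct j a → IsSumProduct k b →
      IsSumProduct (j + k) (a + b)
  | mul {j k a b : ℕ} : IsSumProduct j a → IsSumProduct k b →
      IsSumProduct (j + k) (a * b)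

/-- The complexity `‖n‖` of a positive integer `n`: the least number of 1's
needed to express `n` using only 1's, addition, multiplication and
parentheses. -/
noncomputable def complexity (n : ℕ) : ℕ := sInf {k | IsSumProduct k n}

namespace IsSumProduct

theorem two : IsSumProduct 2 2 := add one one

theorem three : IsSumProduct 3 3 := add two one

theorem pow {k a : ℕ} (h : IsSumProduct k a) {m : ℕ} (hm : m ≠ 0) :
    IsSumProduct (k * m) (a ^ m) := by
  induction m with
  | zero => exact absurd rfl hm
  | succ m ih =>
    rcases eq_or_ne m 0 with rfl | hm'
    · simpa using h
    · simpa [mul_add, pow_succ] using mul (ih hm') h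

end IsSumProduct

theorem complexity_le_of_isSumProduct {k n : ℕ} (h : IsSumProduct k n) : complexity n ≤ k :=
  Nat.sInf_le h

theorem n_516743639_representation :
    (516743639 : ℕ) = 2 * 3 + (1 + 2 ^ 2 * 3 ^ 6) * (2 + 3 ^ 11) ∧
    (516743639 : ℕ) = 353 * 1463863 ∧ Nat.Prime 353 ∧ Nat.Prime 1463863 ∧
    complexity 516743639 ≤ 63 := by
  have identity : (516743639 : ℕ) = 2 * 3 + (1 + 2 ^ 2 * 3 ^ 6) * (2 + 3 ^ 11) := by norm_num
  refine ⟨identity, by norm_num, by norm_num, by norm_num, ?_⟩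
  open IsSumProduct in
  have expr : IsSumProduct ((2 + 3) + ((1 + (2 * 2 + 3 * 6)) + (2 + 3 * 11)))
      (2 * 3 + (1 + 2 ^ 2 * 3 ^ 6) * (2 + 3 ^ 11)) :=
    add (mul two three)
      (mul (add one (mul (two.pow (m := 2) two_ne_zero) (three.pow (m := 6) (by norm_num))))
        (add two (three.pow (m := 11) (by norm_num))))
  rw [identity]
  exact complexity_le_of_isSumProduct expr
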